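/- The sum of Θ_i over all indices i with N/2+1 ≤ i ≤ N is bounded by 2·max{σ/α, 1}; in particular it is bounded by a constant independent of ε and N. -/

import Mathlib

/-!
Writing `x_j = φ(1 - j/N)`, the sequence `x_j` decreases on `N/2 ≤ j ≤ N` because `φ` increases
on `[0, 1/2]`, and `Θ_i = min{(σ/α)(x_{i-1} - x_i), 1} · e^{-x_i}`. Since
`min{a, 1} ≤ 2(1 - e^{-a})` for `a ≥ 0`, each `Θ_i` is at most `2·max{σ/α, 1}` times the increment
`e^{-x_i} - e^{-x_{i-1}}`, and these increments telescope to `e^{-x_N} - e^{-x_{N/2}} ≤ e^{-φ 0} = 1`.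
-/

open Finset Real

theorem min_le_two_mul_one_sub_exp_neg {a : ℝ} (ha : 0 ≤ a) : min a 1 ≤ 2 * (1 - exp (-a)) := by
  rcases le_total a 1 with h | h
  · rw [min_eq_left h]
    have hexp : exp (-a) ≤ 1 / (1 + a) := by
      rw [exp_neg, one_div]
      exact inv_anti₀ (by linarith) (by linarith [add_one_le_exp a])
    have hrat : 1 / (1 + a) ≤ 1 - a / 2 := by
      rw [div_le_iff₀ (by linarith)]
      nlinarith
    linarith
  · rw [min_eq_right h]
    have hexp : exp (-a) ≤ exp (-1) := exp_le_exp.2 (by linarith)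
    have hexp_one : exp (-1) ≤ 1 / 2 := by
      rw [exp_neg, inv_le_comm₀ (exp_pos 1) (by norm_num)]
      linarith [add_one_le_exp (1 : ℝ)]
    linarith

theorem min_mul_le_max_mul_min (c : ℝ) {a : ℝ} (ha : 0 ≤ a) :
    min (c * a) 1 ≤ max c 1 * min a 1 := by
  rw [mul_min_of_nonneg _ _ (zero_le_one.trans (le_max_right c 1)), mul_one]
  exact min_le_min (mul_le_mul_of_nonneg_right (le_max_left c 1) ha) (le_max_right c 1)

theorem min_mul_sub_mul_exp_neg_le (c : ℝ) {x y : ℝ} (hxy : x ≤ y) :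
    min (c * (y - x)) 1 * exp (-x) ≤ 2 * max c 1 * (exp (-x) - exp (-y)) := by
  have hfactor : exp (-x) - exp (-y) = (1 - exp (-(y - x))) * exp (-x) := by
    rw [sub_mul, one_mul, ← exp_add]
    ring_nf
  have hdiff : 0 ≤ y - x := sub_nonneg.2 hxy
  rw [hfactor, ← mul_assoc]
  gcongr
  calc min (c * (y - x)) 1 ≤ max c 1 * min (y - x) 1 := min_mul_le_max_mul_min c hdiff
    _ ≤ max c 1 * (2 * (1 - exp (-(y - x)))) := by
        gcongr
        exact min_le_two_mul_one_sub_exp_neg hdiff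
    _ = 2 * max c 1 * (1 - exp (-(y - x))) := by ring

theorem sum_min_mul_exp_neg_le (c : ℝ) {x : ℕ → ℝ} {m n : ℕ} (hmn : m ≤ n)
    (hx : ∀ i ∈ Ico m n, x (i + 1) ≤ x i) :
    ∑ i ∈ Ico m n, min (c * (x i - x (i + 1))) 1 * exp (-x (i + 1))
      ≤ 2 * max c 1 * (exp (-x n) - exp (-x m)) := by
  rw [← sum_Ico_sub (fun i => exp (-x i)) hmn, mul_sum]
  exact sum_le_sum fun i hi => min_mul_sub_mul_exp_neg_le c (hx i hi)

theorem one_sub_div_mem_Icc_half {N j : ℕ} (hN : 0 < N) (hj : N ≤ 2 * j) (hjN : j ≤ N) :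
    1 - (j : ℝ) / N ∈ Set.Icc (0 : ℝ) (1 / 2) := by
  have hN' : (0 : ℝ) < N := by exact_mod_cast hN
  have hj' : (N : ℝ) ≤ 2 * j := by exact_mod_cast hj
  have hjN' : (j : ℝ) ≤ N := by exact_mod_cast hjN
  constructor
  · rw [sub_nonneg, div_le_one hN']
    exact hjN'
  · have : 1 / 2 ≤ (j : ℝ) / N := by rw [le_div_iff₀ hN']; linarith
    linarith

theorem theta_sum_bound_general
    (α σ ε : ℝ) (hε : 0 < ε)
    (N : ℕ) (hN4 : 4 ≤ N) (hNeven : Even N)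
    (φ φ' : ℝ → ℝ)
    (hφderiv : ∀ t ∈ Set.Icc (0:ℝ) (1/2), HasDerivAt φ (φ' t) t)
    (hφ0 : φ 0 = 0)
    (hφ'pos : ∀ t ∈ Set.Icc (0:ℝ) (1/2), 0 < φ' t)
    (ψ : ℝ → ℝ) (hψ : ∀ t, ψ t = Real.exp (-φ t)) :
    ∑ i ∈ Finset.Icc (N / 2 + 1) N,
        min ((σ * ε / α) * (φ (1 - ((i:ℝ) - 1) / N) - φ (1 - (i:ℝ) / N)) / ε) 1
          * ψ (1 - (i:ℝ) / N)
      ≤ 2 * max (σ / α) 1 := by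
  have hN : 0 < N := by omega
  have hφmono : MonotoneOn φ (Set.Icc 0 (1 / 2)) :=
    monotoneOn_of_hasDerivWithinAt_nonneg (convex_Icc _ _)
      (fun t ht => (hφderiv t ht).continuousAt.continuousWithinAt)
      (fun t ht => (hφderiv t (interior_subset ht)).hasDerivWithinAt)
      (fun t ht => (hφ'pos t (interior_subset ht)).le)
  have hmem : ∀ j : ℕ, N / 2 ≤ j → j ≤ N → 1 - (j : ℝ) / N ∈ Set.Icc (0 : ℝ) (1 / 2) :=
    fun j hj hjN => one_sub_div_mem_Icc_half hN (by obtain ⟨k, rfl⟩ := hNeven; omega) hjN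
  set x : ℕ → ℝ := fun j => φ (1 - (j : ℝ) / N) with hx
  have hxN : x N = 0 := by
    have hN' : (N : ℝ) ≠ 0 := by positivity
    simp only [hx, div_self hN', sub_self, hφ0]
  calc _ = ∑ i ∈ Ico (N / 2) N, min (σ / α * (x i - x (i + 1))) 1 * exp (-x (i + 1)) := by
        rw [← Ico_add_one_right_eq_Icc, ← sum_Ico_add']
        refine sum_congr rfl fun i _ => ?_
        rw [hψ, mul_div_right_comm, div_right_comm, mul_div_cancel_right₀ _ hε.ne']
        simp only [hx]
        push_cast
        ring_nf
    _ ≤ 2 * max (σ / α) 1 * (exp (-x N) - exp (-x (N / 2))) :=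
        sum_min_mul_exp_neg_le _ (Nat.div_le_self N 2) fun i hi => by
          obtain ⟨hi₁, hi₂⟩ := mem_Ico.1 hi
          exact hφmono (hmem (i + 1) (by omega) hi₂) (hmem i hi₁ hi₂.le)
            (by push_cast; gcongr; linarith)
    _ ≤ 2 * max (σ / α) 1 := by
        refine mul_le_of_le_one_right (by positivity) ?_
        rw [hxN, neg_zero, exp_zero]
        linarith [exp_pos (-x (N / 2))]

/-- The sum of `Θ_i = min{h_i/ε, 1}·ψ(1 − t_i)` over all indices
`i` with `N/2+1 ≤ i ≤ N` is bounded by `2·max{σ/α, 1}`, a constant independent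
of `ε` and `N`. -/
theorem theta_sum_bound
    (α σ ε : ℝ) (hα : 0 < α) (hσ : 0 < σ) (hε : 0 < ε)
    (N : ℕ) (hN4 : 4 ≤ N) (hNeven : Even N)
    (φ φ' : ℝ → ℝ)
    (hφderiv : ∀ t ∈ Set.Icc (0:ℝ) (1/2), HasDerivAt φ (φ' t) t)
    (hφ'cont : ContinuousOn φ' (Set.Icc (0:ℝ) (1/2)))
    (hφ0 : φ 0 = 0)
    (hφ'pos : ∀ t ∈ Set.Icc (0:ℝ) (1/2), 0 < φ' t)
    (ψ : ℝ → ℝ) (hψ : ∀ t, ψ t = Real.exp (-φ t)) :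
    ∑ i ∈ Finset.Icc (N / 2 + 1) N,
        min ((σ * ε / α) * (φ (1 - ((i:ℝ) - 1) / N) - φ (1 - (i:ℝ) / N)) / ε) 1
          * ψ (1 - (i:ℝ) / N)
      ≤ 2 * max (σ / α) 1 :=
  theta_sum_bound_general α σ ε hε N hN4 hNeven φ φ' hφderiv hφ0 hφ'pos ψ hψ
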